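/- arXiv:1902.07270 — 2 statements merged into one kernel-verified Lean document; each statement's English description precedes it below -/
import Mathlib

section
/- Let A < B and let i = m + k + 1 with m = 2^j be a wavelet index (i ≥ 2). Then p_{2,i}(x) = ∫_A^x (x−t) h_i(t) dt is monotone nondecreasing on [A,B] and satisfies 0 ≤ p_{2,i}(x) ≤ (B−A)²/(4m²) for all x ∈ [A,B]. -/
/-!
Put `c = A + k (B - A) / m` and `d = (B - A) / (2m)`, so that `h_i` is `1` on `[c, c + d)`, `-1` on
`[c + d, c + 2d)` and `0` elsewhere. Integrating `(x - t)` over the part of each step left of `x`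
gives `p_{2,i}` in closed form; with `u` and `v` the clamps of `x` to `[c, c + d]` and to
`[c + d, c + 2d]`, it reads `((u - c)² + d² - (c + 2d - v)²) / 2`. Both `u - c` and
`c + 2d - v` lie in `[0, d]`, the first nondecreasing and the second nonincreasing in `x`, which
gives monotonicity and `0 ≤ p_{2,i} ≤ d² = (B - A)² / (4m²)` at once.
-/

open MeasureTheory Set

/-- The Haar wavelet on `[A,B]` at dyadic level `j` with shift `k`
(corresponding to wavelet index `i = 2^j + k + 1 ≥ 2`, `m = 2^j`). -/
noncomputable def haarFn (A B : ℝ) (j k : ℕ) (x : ℝ) : ℝ :=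
  if A + k * (B - A) / 2 ^ j ≤ x ∧ x < A + (k + 1 / 2) * (B - A) / 2 ^ j then 1
  else if A + (k + 1 / 2) * (B - A) / 2 ^ j ≤ x ∧ x < A + (k + 1) * (B - A) / 2 ^ j then -1
  else 0

/-- The rise from `0` at `a` to `d ^ 2` at `a + 2 * d`, quadratic on `[a, a + d]` and on
`[a + d, a + 2 * d]`. -/
noncomputable def quadraticStep (a d x : ℝ) : ℝ :=
  ((max a (min (a + d) x) - a) ^ 2 + d ^ 2 - (a + 2 * d - max (a + d) (min (a + 2 * d) x)) ^ 2) / 2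

section QuadraticStep

variable {a d : ℝ}

theorem quadraticStep_monotone (hd : 0 ≤ d) : Monotone (quadraticStep a d) := by
  intro x y hxy
  have hu₀ : a ≤ max a (min (a + d) x) := le_max_left _ _
  have hv₁ : max (a + d) (min (a + 2 * d) y) ≤ a + 2 * d :=
    max_le (by linarith) (min_le_left _ _)
  unfold quadraticStep
  gcongr

theorem quadraticStep_nonneg (hd : 0 ≤ d) (x : ℝ) : 0 ≤ quadraticStep a d x := by
  have hv₀ : a + d ≤ max (a + d) (min (a + 2 * d) x) := le_max_left _ _
  have hv₁ : max (a + d) (min (a + 2 * d) x) ≤ a + 2 * d :=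
    max_le (by linarith) (min_le_left _ _)
  unfold quadraticStep
  nlinarith [sq_nonneg (max a (min (a + d) x) - a)]

theorem quadraticStep_le_sq (hd : 0 ≤ d) (x : ℝ) : quadraticStep a d x ≤ d ^ 2 := by
  have hu₀ : a ≤ max a (min (a + d) x) := le_max_left _ _
  have hu₁ : max a (min (a + d) x) ≤ a + d := max_le (by linarith) (min_le_left _ _)
  unfold quadraticStep
  nlinarith [sq_nonneg (a + 2 * d - max (a + d) (min (a + 2 * d) x))]

theorem half_sq_clamp_sub_eq_quadraticStep (hd : 0 ≤ d) (x : ℝ) :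
    ((x - a) ^ 2 - (x - max a (min (a + d) x)) ^ 2) / 2 -
        ((x - (a + d)) ^ 2 - (x - max (a + d) (min (a + 2 * d) x)) ^ 2) / 2 =
      quadraticStep a d x := by
  unfold quadraticStep
  rcases le_total x a with hxa | hax
  · rw [min_eq_right (by linarith), max_eq_left hxa, min_eq_right (by linarith),
      max_eq_left (by linarith)]
    ring
  rcases le_total x (a + d) with hxd | hdx
  · rw [min_eq_right hxd, max_eq_right hax, min_eq_right (by linarith), max_eq_left hxd]
    ring
  rcases le_total x (a + 2 * d) with hx2d | h2dx
  · rw [min_eq_left hdx, max_eq_right (by linarith), min_eq_right hx2d, max_eq_right hdx]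
    ring
  · rw [min_eq_left hdx, max_eq_right (by linarith), min_eq_left h2dx,
      max_eq_right (by linarith)]
    ring

end QuadraticStep

theorem intervalIntegrable_indicator_Ico_sub (a b x u v : ℝ) :
    IntervalIntegrable ((Ico a b).indicator (fun t => x - t)) volume u v := by
  refine Integrable.intervalIntegrable ?_
  rw [integrable_indicator_iff measurableSet_Ico]
  exact (continuous_const.sub continuous_id).integrableOn_Icc.mono_set Ico_subset_Icc_self

theorem integral_indicator_Ico_sub {A a b x : ℝ} (hAa : A ≤ a) (hAx : A ≤ x) :
    ∫ t in A..x, (Ico a b).indicator (fun t => x - t) t =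
      ((x - a) ^ 2 - (x - max a (min b x)) ^ 2) / 2 := by
  have hset : (Ico a b ∩ Ioc A x : Set ℝ) =ᵐ[volume] Ioc a (max a (min b x)) := by
    have hIoc : Ioc a b ∩ Ioc A x = Ioc a (max a (min b x)) := by
      rw [Ioc_inter_Ioc, max_eq_left hAa]
      rcases le_total a (min b x) with h | h
      · rw [max_eq_right h]
      · rw [max_eq_left h, Ioc_eq_empty (not_lt.2 h), Ioc_eq_empty (lt_irrefl a)]
    exact hIoc ▸ Ico_ae_eq_Ioc.inter (Filter.EventuallyEq.refl _ _)
  rw [intervalIntegral.integral_of_le hAx, integral_indicator measurableSet_Ico,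
    Measure.restrict_restrict measurableSet_Ico, setIntegral_congr_set hset,
    ← intervalIntegral.integral_of_le (le_max_left a _),
    intervalIntegral.integral_sub intervalIntegrable_const
      intervalIntegral.intervalIntegrable_id,
    intervalIntegral.integral_const, integral_id, smul_eq_mul]
  ring

noncomputable def haarStart (A B : ℝ) (j k : ℕ) : ℝ := A + k * (B - A) / 2 ^ j

noncomputable def haarHalfWidth (A B : ℝ) (j : ℕ) : ℝ := (B - A) / (2 * 2 ^ j)

theorem haarHalfWidth_nonneg {A B : ℝ} (hAB : A ≤ B) (j : ℕ) : 0 ≤ haarHalfWidth A B j :=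
  div_nonneg (sub_nonneg.2 hAB) (by positivity)

theorem sq_haarHalfWidth (A B : ℝ) (j : ℕ) :
    haarHalfWidth A B j ^ 2 = (B - A) ^ 2 / (4 * ((2 : ℝ) ^ j) ^ 2) := by
  unfold haarHalfWidth
  ring

theorem haarStart_le {A B : ℝ} (hAB : A ≤ B) (j k : ℕ) : A ≤ haarStart A B j k := by
  unfold haarStart
  have : 0 ≤ (k : ℝ) * (B - A) / 2 ^ j := by
    have := sub_nonneg.2 hAB
    positivity
  linarith

theorem sub_mul_haarFn (A B : ℝ) (j k : ℕ) (x t : ℝ) :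
    (x - t) * haarFn A B j k t =
      (Ico (haarStart A B j k) (haarStart A B j k + haarHalfWidth A B j)).indicator
          (fun t => x - t) t -
        (Ico (haarStart A B j k + haarHalfWidth A B j)
          (haarStart A B j k + 2 * haarHalfWidth A B j)).indicator (fun t => x - t) t := by
  have hmid : A + (k + 1 / 2) * (B - A) / 2 ^ j = haarStart A B j k + haarHalfWidth A B j := by
    unfold haarStart haarHalfWidth
    field_simp
    ring
  have hend : A + (k + 1) * (B - A) / 2 ^ j = haarStart A B j k + 2 * haarHalfWidth A B j := by
    unfold haarStart haarHalfWidth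
    field_simp
    ring
  have hstart : A + k * (B - A) / 2 ^ j = haarStart A B j k := rfl
  simp only [haarFn, hstart, hmid, hend, indicator_apply, mem_Ico]
  split_ifs with h₁ h₂
  · exact absurd h₂.1 (not_le.2 h₁.2)
  all_goals ring

theorem integral_sub_mul_haarFn {A B x : ℝ} (hAB : A ≤ B) (hAx : A ≤ x) (j k : ℕ) :
    ∫ t in A..x, (x - t) * haarFn A B j k t =
      quadraticStep (haarStart A B j k) (haarHalfWidth A B j) x := by
  have hd := haarHalfWidth_nonneg hAB j
  have hc := haarStart_le hAB j k
  simp only [sub_mul_haarFn]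
  rw [intervalIntegral.integral_sub (intervalIntegrable_indicator_Ico_sub ..)
      (intervalIntegrable_indicator_Ico_sub ..),
    integral_indicator_Ico_sub hc hAx, integral_indicator_Ico_sub (by linarith) hAx,
    half_sq_clamp_sub_eq_quadraticStep hd]

theorem haar_second_integral_bounds_general (A B : ℝ) (j k : ℕ) :
    MonotoneOn (fun x : ℝ => ∫ t in A..x, (x - t) * haarFn A B j k t) (Set.Icc A B) ∧
    ∀ x ∈ Set.Icc A B,
      0 ≤ (∫ t in A..x, (x - t) * haarFn A B j k t) ∧
      (∫ t in A..x, (x - t) * haarFn A B j k t) ≤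
        (B - A) ^ 2 / (4 * ((2 : ℝ) ^ j) ^ 2) := by
  refine ⟨fun x hx y hy hxy => ?_, fun x ⟨hAx, hxB⟩ => ?_⟩
  · have hAB := hx.1.trans hx.2
    simp only [integral_sub_mul_haarFn hAB hx.1, integral_sub_mul_haarFn hAB hy.1]
    exact quadraticStep_monotone (haarHalfWidth_nonneg hAB j) hxy
  · have hd := haarHalfWidth_nonneg (hAx.trans hxB) j
    rw [integral_sub_mul_haarFn (hAx.trans hxB) hAx, ← sq_haarHalfWidth]
    exact ⟨quadraticStep_nonneg hd x, quadraticStep_le_sq hd x⟩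

/-- For a Haar wavelet with `i = m + k + 1`, `m = 2^j`, the second repeated integral
`p_{2,i}(x) = ∫_A^x (x-t) h_i(t) dt` is monotone nondecreasing on `[A,B]` and
satisfies `0 ≤ p_{2,i}(x) ≤ (B-A)²/(4m²)` there. -/
theorem haar_second_integral_bounds (A B : ℝ) (hAB : A < B) (j k : ℕ) (hk : k < 2 ^ j) :
    MonotoneOn (fun x : ℝ => ∫ t in A..x, (x - t) * haarFn A B j k t) (Set.Icc A B) ∧
    ∀ x ∈ Set.Icc A B,
      0 ≤ (∫ t in A..x, (x - t) * haarFn A B j k t) ∧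
      (∫ t in A..x, (x - t) * haarFn A B j k t) ≤
        (B - A) ^ 2 / (4 * ((2 : ℝ) ^ j) ^ 2) :=
  haar_second_integral_bounds_general A B j k
end

section
/- Let v : [0,1]² → ℝ be Lipschitz continuous with constant C in the ℓ¹ sense, i.e. |v(x,y) − v(x′,y′)| ≤ C(|x − x′| + |y − y′|) for all points of [0,1]². Let i_1 = 2^j + k_1 + 1 and i_2 = 2^j + k_2 + 1 be two wavelet indices at the same resolution level j, and set m = 2^j. Then the two-dimensional Haar wavelet coefficient a_{i_1,i_2} = ∫_0^1 ∫_0^1 v(x,y) h_{i_1}(x) h_{i_2}(y) dx dy satisfies |a_{i_1,i_2}| ≤ C/(4m³). -/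
open MeasureTheory

/-!
Against a Haar wavelet, a function `f` integrates to its integral over the left half of the
support minus its integral over the right half. Shifting the right half onto the left one, this
is `∫ (f x - f (x + ε))` over an interval of length `ε`, the half-width of the support, so it is
at most `L ε²` for an `L`-Lipschitz `f`, and at most `2 M ε` for `|f| ≤ M`. In two dimensions,
integrating in `y` first gives `G x = ∫ v x y h(y) dy`; the second bound applied to
`y ↦ v x y - v x' y` shows that `G` is `2 C ε`-Lipschitz, and then the first one gives
`|a| ≤ 2 C ε³ = C / (4 m³)`.
-/

open Set intervalIntegral Interval

/-- The knots of `haarFn A B j k` are `haarKnot A B j t` for `t = k, k + 1/2, k + 1`. -/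
noncomputable def haarKnot (A B : ℝ) (j : ℕ) (t : ℝ) : ℝ := A + t * (B - A) / 2 ^ j

section Knots

variable {A B : ℝ} {j : ℕ}

theorem haarKnot_zero : haarKnot A B j 0 = A := by simp [haarKnot]

theorem haarKnot_two_pow : haarKnot A B j (2 ^ j) = B := by
  simp [haarKnot, mul_div_cancel_left₀ _ (pow_ne_zero j (two_ne_zero' ℝ))]

theorem haarKnot_mono (hAB : A ≤ B) {s t : ℝ} (hst : s ≤ t) :
    haarKnot A B j s ≤ haarKnot A B j t := by
  unfold haarKnot
  gcongr

theorem haarKnot_add_half (t : ℝ) :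
    haarKnot A B j (t + 1 / 2) = haarKnot A B j t + (B - A) / (2 * 2 ^ j) := by
  unfold haarKnot
  ring

theorem haarKnot_mem_Icc (hAB : A ≤ B) {t : ℝ} (h0 : 0 ≤ t) (h1 : t ≤ 2 ^ j) :
    haarKnot A B j t ∈ Icc A B :=
  ⟨haarKnot_zero.symm.trans_le (haarKnot_mono hAB h0),
    (haarKnot_mono hAB h1).trans_eq haarKnot_two_pow⟩

theorem uIcc_haarKnot_subset_Icc (hAB : A ≤ B) {s t : ℝ} (h0 : 0 ≤ s) (hst : s ≤ t)
    (h1 : t ≤ 2 ^ j) : [[haarKnot A B j s, haarKnot A B j t]] ⊆ Icc A B :=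
  uIcc_subset_Icc (haarKnot_mem_Icc hAB h0 (hst.trans h1))
    (haarKnot_mem_Icc hAB (h0.trans hst) h1)

end Knots

theorem mul_haarFn_eq_indicator_sub_indicator (A B : ℝ) (j k : ℕ) (f : ℝ → ℝ) (x : ℝ) :
    f x * haarFn A B j k x =
      (Ico (haarKnot A B j k) (haarKnot A B j (k + 1 / 2))).indicator f x -
        (Ico (haarKnot A B j (k + 1 / 2)) (haarKnot A B j (k + 1))).indicator f x := by
  unfold haarFn haarKnot
  simp only [indicator_apply, mem_Ico]
  split_ifs <;> grind

theorem intervalIntegral_indicator_Ico {f : ℝ → ℝ} {A B a b : ℝ} (hA : A ≤ a) (hab : a ≤ b)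
    (hB : b ≤ B) : ∫ x in A..B, (Ico a b).indicator f x = ∫ x in a..b, f x := by
  rw [integral_of_le (hA.trans (hab.trans hB)), integral_of_le hab, integral_Ioc_eq_integral_Ioo,
    ← integral_Ico_eq_integral_Ioo, setIntegral_indicator measurableSet_Ico,
    inter_eq_right.2 (Ico_subset_Ico hA hB), integral_Ico_eq_integral_Ioo,
    integral_Ioc_eq_integral_Ioo]

theorem IntervalIntegrable.indicator {f : ℝ → ℝ} {μ : Measure ℝ} {a b : ℝ}
    (hf : IntervalIntegrable f μ a b) {s : Set ℝ} (hs : MeasurableSet s) :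
    IntervalIntegrable (s.indicator f) μ a b :=
  ⟨hf.1.indicator hs, hf.2.indicator hs⟩

section HaarCoefficient

variable {A B : ℝ} {j k : ℕ} {f : ℝ → ℝ}

theorem IntervalIntegrable.mul_haarFn (hf : IntervalIntegrable f volume A B) :
    IntervalIntegrable (fun x => f x * haarFn A B j k x) volume A B := by
  simp only [mul_haarFn_eq_indicator_sub_indicator]
  exact (hf.indicator measurableSet_Ico).sub (hf.indicator measurableSet_Ico)

theorem integral_mul_haarFn (hAB : A ≤ B) (hk : k < 2 ^ j)
    (hf : IntervalIntegrable f volume A B) :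
    ∫ x in A..B, f x * haarFn A B j k x =
      (∫ x in haarKnot A B j k..haarKnot A B j (k + 1 / 2), f x) -
        ∫ x in haarKnot A B j (k + 1 / 2)..haarKnot A B j (k + 1), f x := by
  have hk' : (k : ℝ) + 1 ≤ 2 ^ j := by exact_mod_cast hk
  have hk0 : (0 : ℝ) ≤ k := k.cast_nonneg
  simp only [mul_haarFn_eq_indicator_sub_indicator]
  rw [integral_sub (hf.indicator measurableSet_Ico) (hf.indicator measurableSet_Ico),
    intervalIntegral_indicator_Ico (haarKnot_mem_Icc hAB hk0 (by linarith)).1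
      (haarKnot_mono hAB (by linarith)) (haarKnot_mem_Icc hAB (by linarith) (by linarith)).2,
    intervalIntegral_indicator_Ico (haarKnot_mem_Icc hAB (by linarith) (by linarith)).1
      (haarKnot_mono hAB (by linarith)) (haarKnot_mem_Icc hAB (by linarith) hk').2]

theorem abs_integral_mul_haarFn_le (hAB : A ≤ B) (hk : k < 2 ^ j)
    (hf : IntervalIntegrable f volume A B) {M : ℝ} (hM : ∀ x ∈ Icc A B, |f x| ≤ M) :
    |∫ x in A..B, f x * haarFn A B j k x| ≤ M * ((B - A) / 2 ^ j) := by
  have hk' : (k : ℝ) + 1 ≤ 2 ^ j := by exact_mod_cast hk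
  have hk0 : (0 : ℝ) ≤ k := k.cast_nonneg
  have hhalf : ∀ t : ℝ, 0 ≤ t → t + 1 / 2 ≤ 2 ^ j →
      |∫ x in haarKnot A B j t..haarKnot A B j (t + 1 / 2), f x| ≤
        M * ((B - A) / (2 * 2 ^ j)) := by
    intro t h0 h1
    have hε : 0 ≤ (B - A) / (2 * 2 ^ j) := div_nonneg (sub_nonneg.2 hAB) (by positivity)
    have hbound := norm_integral_le_of_norm_le_const (f := f) fun x hx =>
      (Real.norm_eq_abs _).trans_le
        (hM x (uIcc_haarKnot_subset_Icc hAB h0 (by linarith) h1 (uIoc_subset_uIcc hx)))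
    rwa [Real.norm_eq_abs, haarKnot_add_half, add_sub_cancel_left, abs_of_nonneg hε,
      ← haarKnot_add_half] at hbound
  rw [integral_mul_haarFn hAB hk hf]
  calc _ ≤ _ := abs_sub _ _
    _ ≤ M * ((B - A) / (2 * 2 ^ j)) + M * ((B - A) / (2 * 2 ^ j)) :=
        add_le_add (hhalf k hk0 (by linarith))
          (by rw [show (k : ℝ) + 1 = k + 1 / 2 + 1 / 2 by ring]
              exact hhalf _ (by linarith) (by linarith))
    _ = M * ((B - A) / 2 ^ j) := by ring

theorem abs_integral_mul_haarFn_le_of_lipschitzOnWith (hAB : A ≤ B) (hk : k < 2 ^ j)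
    {L : NNReal} (hf : LipschitzOnWith L f (Icc A B)) :
    |∫ x in A..B, f x * haarFn A B j k x| ≤ L * ((B - A) / (2 * 2 ^ j)) ^ 2 := by
  have hk' : (k : ℝ) + 1 ≤ 2 ^ j := by exact_mod_cast hk
  have hk0 : (0 : ℝ) ≤ k := k.cast_nonneg
  set ε := (B - A) / (2 * 2 ^ j)
  have hε : 0 ≤ ε := div_nonneg (sub_nonneg.2 hAB) (by positivity)
  set a := haarKnot A B j k
  have hc : haarKnot A B j (k + 1 / 2) = a + ε := haarKnot_add_half _
  have hd : haarKnot A B j (k + 1) = a + ε + ε := by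
    rw [← hc, ← haarKnot_add_half]; ring_nf
  have hleft : [[a, a + ε]] ⊆ Icc A B := by
    rw [← hc]; exact uIcc_haarKnot_subset_Icc hAB hk0 (by linarith) (by linarith)
  have hright : [[a + ε, a + ε + ε]] ⊆ Icc A B := by
    rw [← hd, ← hc]; exact uIcc_haarKnot_subset_Icc hAB (by linarith) (by linarith) hk'
  have hshift : ∫ x in a + ε..a + ε + ε, f x = ∫ x in a..a + ε, f (x + ε) :=
    (integral_comp_add_right f ε).symm
  have hint_shift : IntervalIntegrable (fun x => f (x + ε)) volume a (a + ε) := by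
    simpa using (hf.continuousOn.mono hright).intervalIntegrable.comp_add_right ε
  rw [integral_mul_haarFn hAB hk (hf.continuousOn.intervalIntegrable_of_Icc hAB), hc, hd,
    hshift, ← integral_sub (hf.continuousOn.mono hleft).intervalIntegrable hint_shift]
  have hbound : ∀ x ∈ Ι a (a + ε), ‖f x - f (x + ε)‖ ≤ L * ε := by
    intro x hx
    rw [uIoc_of_le (by linarith)] at hx
    have hx' : x + ε ∈ [[a + ε, a + ε + ε]] := by
      rw [uIcc_of_le (by linarith)]; exact ⟨by linarith [hx.1], by linarith [hx.2]⟩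
    calc ‖f x - f (x + ε)‖ = dist (f x) (f (x + ε)) := (dist_eq_norm _ _).symm
      _ ≤ L * dist x (x + ε) := hf.dist_le_mul x (hleft (Ioc_subset_Icc_self.trans
          Icc_subset_uIcc hx)) _ (hright hx')
      _ = L * ε := by rw [Real.dist_eq, sub_add_cancel_left, abs_neg, abs_of_nonneg hε]
  have := norm_integral_le_of_norm_le_const hbound
  rwa [Real.norm_eq_abs, add_sub_cancel_left, abs_of_nonneg hε, mul_assoc, ← sq] at this

theorem lipschitzOnWith_integral_mul_haarFn {X : Type*} [PseudoMetricSpace X]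
    {v : X → ℝ → ℝ} {s : Set X} {K : NNReal} (hAB : A ≤ B) (hk : k < 2 ^ j)
    (hint : ∀ x ∈ s, IntervalIntegrable (v x) volume A B)
    (hv : ∀ x ∈ s, ∀ x' ∈ s, ∀ y ∈ Icc A B, |v x y - v x' y| ≤ K * dist x x') :
    LipschitzOnWith (K * (B - A).toNNReal / 2 ^ j)
      (fun x => ∫ y in A..B, v x y * haarFn A B j k y) s := by
  refine LipschitzOnWith.of_dist_le_mul fun x hx x' hx' => ?_
  rw [Real.dist_eq, ← integral_sub (hint x hx).mul_haarFn (hint x' hx').mul_haarFn]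
  simp_rw [← sub_mul]
  calc _ ≤ K * dist x x' * ((B - A) / 2 ^ j) :=
        abs_integral_mul_haarFn_le hAB hk ((hint x hx).sub (hint x' hx')) (hv x hx x' hx')
    _ = _ := by
      push_cast [Real.coe_toNNReal _ (sub_nonneg.2 hAB)]
      ring

end HaarCoefficient

/-- If `v` is Lipschitz on `[0,1]²` with constant `C` in the `ℓ¹` sense, then the
two-dimensional Haar coefficient at same resolution level `j` (indices
`i₁ = 2^j + k₁ + 1`, `i₂ = 2^j + k₂ + 1`, `m = 2^j`) satisfies
`|a_{i₁,i₂}| ≤ C/(4m³)`. -/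
theorem haar_coeff2d_lipschitz_bound (C : ℝ) (v : ℝ → ℝ → ℝ)
    (hv : ∀ x ∈ Set.Icc (0 : ℝ) 1, ∀ y ∈ Set.Icc (0 : ℝ) 1,
      ∀ x' ∈ Set.Icc (0 : ℝ) 1, ∀ y' ∈ Set.Icc (0 : ℝ) 1,
      |v x y - v x' y'| ≤ C * (|x - x'| + |y - y'|))
    (j k1 k2 : ℕ) (hk1 : k1 < 2 ^ j) (hk2 : k2 < 2 ^ j) :
    |∫ x in (0 : ℝ)..1, ∫ y in (0 : ℝ)..1,
        v x y * haarFn 0 1 j k1 x * haarFn 0 1 j k2 y| ≤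
      C / (4 * ((2 : ℝ) ^ j) ^ 3) := by
  have hC : 0 ≤ C := by
    simpa using (abs_nonneg _).trans
      (hv 1 (by norm_num) 0 (by norm_num) 0 (by norm_num) 0 (by norm_num))
  have hint : ∀ x ∈ Icc (0 : ℝ) 1, IntervalIntegrable (v x) volume 0 1 := fun x hx =>
    (LipschitzOnWith.of_dist_le_mul (K := C.toNNReal) fun y hy y' hy' => by
      simpa [Real.dist_eq, Real.coe_toNNReal C hC] using hv x hx y hy x hx y' hy'
    ).continuousOn.intervalIntegrable_of_Icc zero_le_one
  have hG := lipschitzOnWith_integral_mul_haarFn (K := C.toNNReal) zero_le_one hk2 hint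
    fun x hx x' hx' y hy => by
      simpa [Real.dist_eq, Real.coe_toNNReal C hC] using hv x hx y hy x' hx' y hy
  simp_rw [mul_right_comm _ (haarFn 0 1 j k1 _), intervalIntegral.integral_mul_const]
  calc _ ≤ _ := abs_integral_mul_haarFn_le_of_lipschitzOnWith zero_le_one hk1 hG
    _ = C / (4 * ((2 : ℝ) ^ j) ^ 3) := by
      push_cast [Real.coe_toNNReal C hC, sub_zero, Real.toNNReal_one]
      field_simp
      ring
end
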